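/- The CDF F(r) defined piecewise by F(r) = (2/3)r³/(R₀²H) for 0 ≤ r < H, F(r) = r²/R₀² − H²/(3R₀²) for H ≤ r < R₀, and F(r) = r²/R₀² − H²/(3R₀²) − (2/3)(r² − R₀²)^{3/2}/(R₀²H) for R₀ ≤ r ≤ √(R₀²+H²), is continuous on [0, √(R₀²+H²)] and satisfies F(0) = 0 and F(√(R₀²+H²)) = 1. -/
import Mathlib


open MeasureTheory Real
open scoped Classical

noncomputable def cylCDF (R₀ H : ℝ) (r : ℝ) : ℝ :=
  if r < H then (2 / 3) * r ^ 3 / (R₀ ^ 2 * H)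
  else if r < R₀ then r ^ 2 / R₀ ^ 2 - H ^ 2 / (3 * R₀ ^ 2)
  else r ^ 2 / R₀ ^ 2 - H ^ 2 / (3 * R₀ ^ 2)
        - (2 / 3) * (r ^ 2 - R₀ ^ 2) ^ ((3:ℝ) / 2) / (R₀ ^ 2 * H)

theorem stmt_3 (R₀ H : ℝ) (hR : 0 < R₀) (hH : 0 < H) (hHR : H < R₀) :
    ContinuousOn (cylCDF R₀ H) (Set.Icc 0 (Real.sqrt (R₀ ^ 2 + H ^ 2))) ∧
    cylCDF R₀ H 0 = 0 ∧
    cylCDF R₀ H (Real.sqrt (R₀ ^ 2 + H ^ 2)) = 1 := by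
  have hRne : R₀ ≠ 0 := ne_of_gt hR
  have hHne : H ≠ 0 := ne_of_gt hH
  have hA : Continuous (fun r : ℝ => (2 / 3) * r ^ 3 / (R₀ ^ 2 * H)) := by continuity
  have hB : Continuous (fun r : ℝ => r ^ 2 / R₀ ^ 2 - H ^ 2 / (3 * R₀ ^ 2)) := by continuity
  have hrpow : Continuous (fun r : ℝ => (r ^ 2 - R₀ ^ 2) ^ ((3:ℝ) / 2)) := by
    rw [continuous_iff_continuousAt]
    intro x
    exact (((continuous_pow 2).sub continuous_const).continuousAt).rpow_const (Or.inr (by norm_num))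
  have hC : Continuous (fun r : ℝ => r ^ 2 / R₀ ^ 2 - H ^ 2 / (3 * R₀ ^ 2)
      - (2 / 3) * (r ^ 2 - R₀ ^ 2) ^ ((3:ℝ) / 2) / (R₀ ^ 2 * H)) := by
    exact hB.sub ((continuous_const.mul hrpow).div_const _)
  have hInner : Continuous (fun r : ℝ => if r < R₀ then r ^ 2 / R₀ ^ 2 - H ^ 2 / (3 * R₀ ^ 2)
      else r ^ 2 / R₀ ^ 2 - H ^ 2 / (3 * R₀ ^ 2)
        - (2 / 3) * (r ^ 2 - R₀ ^ 2) ^ ((3:ℝ) / 2) / (R₀ ^ 2 * H)) := by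
    apply hB.if _ hC
    intro a ha
    rw [show {r : ℝ | r < R₀} = Set.Iio R₀ from rfl, frontier_Iio, Set.mem_singleton_iff] at ha
    subst ha
    rw [sub_self, Real.zero_rpow (by norm_num)]
    ring
  have hcont : Continuous (cylCDF R₀ H) := by
    unfold cylCDF
    apply hA.if _ hInner
    intro a ha
    rw [show {r : ℝ | r < H} = Set.Iio H from rfl, frontier_Iio, Set.mem_singleton_iff] at ha
    subst ha
    rw [if_pos hHR]
    field_simp
    ring
  refine ⟨hcont.continuousOn, ?_, ?_⟩
  · simp [cylCDF, hH]
  · have hsq : Real.sqrt (R₀ ^ 2 + H ^ 2) ^ 2 = R₀ ^ 2 + H ^ 2 :=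
      Real.sq_sqrt (by positivity)
    have hge : R₀ ≤ Real.sqrt (R₀ ^ 2 + H ^ 2) := by
      have h := Real.sqrt_le_sqrt (show R₀ ^ 2 ≤ R₀ ^ 2 + H ^ 2 by nlinarith)
      rwa [Real.sqrt_sq hR.le] at h
    have h1 : ¬ Real.sqrt (R₀ ^ 2 + H ^ 2) < H := not_lt.mpr (le_trans hHR.le hge)
    have h2 : ¬ Real.sqrt (R₀ ^ 2 + H ^ 2) < R₀ := not_lt.mpr hge
    rw [cylCDF, if_neg h1, if_neg h2, hsq]
    have : (R₀ ^ 2 + H ^ 2 - R₀ ^ 2) ^ ((3:ℝ)/2) = H ^ 3 := by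
      rw [show R₀ ^ 2 + H ^ 2 - R₀ ^ 2 = H ^ 2 by ring,
        ← Real.rpow_natCast H 2, ← Real.rpow_mul hH.le,
        show ((2:ℕ):ℝ) * ((3:ℝ)/2) = ((3:ℕ):ℝ) by norm_num, Real.rpow_natCast]
    rw [this]
    field_simp
    ring
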